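/- Let K → L be a defect Artin-Schreier extension of fields of characteristic p > 0 with valuation ω of L restricting to ν on K. If Θ and Θ' are any two Artin-Schreier generators of L over K (i.e. L = K(Θ) = K(Θ') with Θ^p − Θ ∈ K and Θ'^p − Θ' ∈ K), then dist(Θ,K) = dist(Θ',K); thus the distance of the Artin-Schreier extension is well defined. -/

import Mathlib

noncomputable section

namespace ASDefect

variable {Γ : Type*} [LinearOrderedCommGroupWithZero Γ]

/-- The value group `wL` of a valuation `w` on a field `L`, as a subgroup of `Γˣ`. -/
def valueGroup {L : Type*} [Field L] (w : Valuation L Γ) : Subgroup Γˣ :=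
  (Units.map w.toMonoidWithZeroHom.toMonoidHom).range

/-- The value group `vK` of the restriction of `w` to `K`, as a subgroup of `Γˣ`. -/
def valueGroupRes (K : Type*) {L : Type*} [Field K] [Field L] [Algebra K L]
    (w : Valuation L Γ) : Subgroup Γˣ :=
  ((Units.map w.toMonoidWithZeroHom.toMonoidHom).comp
      (Units.map (algebraMap K L).toMonoidHom)).range

/-- The reduced ramification index `e(w/v) = [wL : vK]`. -/
def ramificationIndex (K : Type*) {L : Type*} [Field K] [Field L] [Algebra K L]
    (w : Valuation L Γ) : ℕ :=
  (valueGroupRes K w).relIndex (valueGroup w)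

variable {K L : Type*} [Field K] [Field L] [Algebra K L]

lemma isUnit_valuationSubring_iff (w : Valuation L Γ) (a : w.valuationSubring) :
    IsUnit a ↔ w a = 1 := by
  constructor
  · rintro ⟨u, rfl⟩
    have h1 : w ((u : w.valuationSubring) : L) * w (((u⁻¹ : _) : w.valuationSubring) : L) = 1 := by
      rw [← Valuation.map_mul]
      norm_cast
      rw [mul_inv_cancel]
      simp
    have hu : w ((u : w.valuationSubring) : L) ≤ 1 := (u : w.valuationSubring).2
    have hv : w (((u⁻¹ : _) : w.valuationSubring) : L) ≤ 1 := ((u⁻¹ : _) : w.valuationSubring).2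
    have h2 : (1 : Γ) ≤ w (((u⁻¹ : _) : w.valuationSubring) : L) := by
      calc (1 : Γ) = w ((u : w.valuationSubring) : L) * w (((u⁻¹ : _) : w.valuationSubring) : L) :=
            h1.symm
        _ ≤ 1 * w (((u⁻¹ : _) : w.valuationSubring) : L) := by
            exact mul_le_mul_left hu _
        _ = w (((u⁻¹ : _) : w.valuationSubring) : L) := one_mul _
    have : w (((u⁻¹ : _) : w.valuationSubring) : L) = 1 := le_antisymm hv h2
    rw [this, mul_one] at h1
    exact h1
  · intro h
    have ha : ((a : L))⁻¹ ∈ w.valuationSubring := by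
      rw [Valuation.mem_valuationSubring_iff, map_inv₀, h, inv_one]
    refine IsUnit.of_mul_eq_one (a := a) ⟨(a : L)⁻¹, ha⟩ ?_
    have hne : (a : L) ≠ 0 := by
      intro hc
      rw [hc, Valuation.map_zero] at h
      exact zero_ne_one h
    ext
    push_cast
    field_simp

/-- The inclusion of the valuation ring of the restriction of `w` to `K` into the
valuation ring of `w`. -/
def integersMap (K : Type*) {L : Type*} [Field K] [Field L] [Algebra K L]
    (w : Valuation L Γ) :
    (w.comap (algebraMap K L)).valuationSubring →+* w.valuationSubring :=
  RingHom.codRestrict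
    ((algebraMap K L).comp (w.comap (algebraMap K L)).valuationSubring.subtype)
    w.valuationSubring.toSubring
    (fun x => by
      have := x.2
      rw [Valuation.mem_valuationSubring_iff] at this
      exact this)

lemma isLocalHom_integersMap (w : Valuation L Γ) : IsLocalHom (integersMap K w) := by
  constructor
  intro a ha
  rw [isUnit_valuationSubring_iff] at ha
  rw [isUnit_valuationSubring_iff]
  exact ha

/-- The residue degree `f(w/v) = [Lw : Kv]`. -/
def residueDegree (K : Type*) {L : Type*} [Field K] [Field L] [Algebra K L]
    (w : Valuation L Γ) : ℕ :=
  letI : IsLocalHom (integersMap K w) := isLocalHom_integersMap w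
  letI : Algebra (IsLocalRing.ResidueField (w.comap (algebraMap K L)).valuationSubring)
      (IsLocalRing.ResidueField w.valuationSubring) :=
    (IsLocalRing.ResidueField.map (integersMap K w)).toAlgebra
  Module.finrank (IsLocalRing.ResidueField (w.comap (algebraMap K L)).valuationSubring)
    (IsLocalRing.ResidueField w.valuationSubring)

/-- The number `g` of extensions of the restriction `v = w|K` to `L`, counted as
valuation subrings of `L` lying over the valuation subring of `v`. -/
def numExtensions (K : Type*) {L : Type*} [Field K] [Field L] [Algebra K L]
    (w : Valuation L Γ) : ℕ :=
  Nat.card {A : ValuationSubring L //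
    A.comap (algebraMap K L) = (w.comap (algebraMap K L)).valuationSubring}

/-- The defect `δ(w/v)`, defined through the formula `[L:K] = e f δ g`. -/
def defect (K : Type*) {L : Type*} [Field K] [Field L] [Algebra K L]
    (w : Valuation L Γ) : ℕ :=
  Module.finrank K L /
    (ramificationIndex K w * residueDegree K w * numExtensions K w)

/-- `L = K(Θ)` is an Artin-Schreier extension of `K` with Artin-Schreier
generator `Θ`: `Θ^p - Θ ∈ K` and `L = K(Θ)` has degree `p`. -/
def IsArtinSchreierExt (K : Type*) {L : Type*} [Field K] [Field L] [Algebra K L]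
    (p : ℕ) (Θ : L) : Prop :=
  Θ ∉ Set.range (algebraMap K L) ∧ (Θ ^ p - Θ) ∈ Set.range (algebraMap K L) ∧
    IntermediateField.adjoin K {Θ} = ⊤ ∧ Module.finrank K L = p

/-- The set `Λ^L(z, K) = { w(z - c) | c ∈ K, w(z - c) ∈ vK }` of values of `z - K`
lying in the value group of the restriction `v` of `w` to `K`. -/
def valuesSet (K : Type*) {L : Type*} [Field K] [Field L] [Algebra K L]
    (w : Valuation L Γ) (z : L) : Set Γ :=
  {γ : Γ | ∃ c : K, z - algebraMap K L c ≠ 0 ∧ w (z - algebraMap K L c) = γ ∧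
    ∃ d : K, d ≠ 0 ∧ w (algebraMap K L d) = γ}

/-- The initial segment of the cut `dist (z, K)` in the divisible hull of `vK`:
the least initial segment in which `w(z - K)` is cofinal, i.e. the downward closure
of `Λ^L(z, K)`.  Two cuts in the divisible hull induced by subsets of the value
group are equal iff the downward closures of these subsets taken inside `Γ` are
equal, so we record the downward closure inside `Γ`. -/
def distInitialSeg (K : Type*) {L : Type*} [Field K] [Field L] [Algebra K L]
    (w : Valuation L Γ) (z : L) : Set Γ :=
  {γ : Γ | ∃ t ∈ valuesSet K w z, γ ≤ t}

universe u v w'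

/-- A witness to the *dependence* of a defect Artin-Schreier extension `L = K(Θ)`
(Kuhlmann): an immediate purely inseparable extension `K(η)` of `(K, v)` of degree
`p` (realized in a valued extension field `(M, wM)` of `(L, w)`) with `η ∼_K Θ`,
that is, `wM (Θ - η) > dist (Θ, K)`. -/
structure DependentDefectWitness (K : Type u) {L : Type v} [Field K] [Field L]
    [Algebra K L] {Γ : Type w'} [LinearOrderedCommGroupWithZero Γ]
    (w : Valuation L Γ) (p : ℕ) (Θ : L) where
  M : Type v
  [fieldM : Field M]
  ι : L →+* M
  Γ' : Type w'
  [ordM : LinearOrderedCommGroupWithZero Γ']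
  j : Γ →*₀ Γ'
  wM : Valuation M Γ'
  η : M
  strictMono_j : StrictMono j
  extends_w : ∀ x : L, wM (ι x) = j (w x)
  pow_mem : η ^ p ∈ Set.range (ι.comp (algebraMap K L))
  not_mem : η ∉ Set.range (ι.comp (algebraMap K L))
  immediate_values : ∀ m ∈ Subfield.closure (Set.range (ι.comp (algebraMap K L)) ∪ {η}),
    m ≠ 0 → ∃ c : K, c ≠ 0 ∧ wM m = j (w (algebraMap K L c))
  immediate_residue : ∀ m ∈ Subfield.closure (Set.range (ι.comp (algebraMap K L)) ∪ {η}),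
    wM m = 1 → ∃ c : K, m - ι (algebraMap K L c) = 0 ∨ wM (m - ι (algebraMap K L c)) < 1
  equiv_theta : ∀ γ ∈ distInitialSeg K w Θ, j γ < wM (ι Θ - η)

/-- A defect Artin-Schreier extension is *dependent* if there is an immediate purely
inseparable extension `K(η)|K` of degree `p` with `η ∼_K Θ`; it is *independent*
otherwise. -/
def IsDependentDefect (K : Type u) {L : Type v} [Field K] [Field L]
    [Algebra K L] {Γ : Type w'} [LinearOrderedCommGroupWithZero Γ]
    (w : Valuation L Γ) (p : ℕ) (Θ : L) : Prop :=
  Nonempty (DependentDefectWitness K w p Θ)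

end ASDefect

/-!
`L/K` has the `K`-automorphism `σ : Θ ↦ Θ + 1`. For a second generator `Θ'`, `d = σΘ' - Θ'`
satisfies `d ^ p = d`, so `d = u` lies in the prime field, and `Θ' - uΘ` is fixed by `σ`, hence
lies in `K` because `[L : K]` is prime. Thus `Θ' = uΘ + c` with `u ∈ 𝔽ₚˣ` and `c ∈ K`. As `u` is a
root of unity, `ω u = 1`, so `z ↦ uz + c` preserves the values `ω(z - K)` and the distance.
-/

theorem Valuation.map_eq_one_of_pow_eq_self {Γ L : Type*} [LinearOrderedCommGroupWithZero Γ]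
    [Field L] (v : Valuation L Γ) {n : ℕ} (hn : 1 < n) {x : L} (hx0 : x ≠ 0)
    (hx : x ^ n = x) : v x = 1 := by
  have hunit : x ^ (n - 1) = 1 := by
    refine mul_left_cancel₀ hx0 ?_
    rw [← pow_succ', Nat.sub_add_cancel hn.le, hx, mul_one]
  rw [← pow_eq_one_iff_left (Nat.sub_ne_zero_of_lt hn), ← map_pow, hunit, map_one]

section FieldTheory

open Polynomial IntermediateField

variable {K L : Type*} [Field K] [Field L] [Algebra K L]

theorem mem_range_algebraMap_of_pow_char_eq_self (p : ℕ) [Fact p.Prime] [CharP L p] {d : L}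
    (hd : d ^ p = d) : d ∈ Set.range (algebraMap K L) :=
  bot_le (a := (algebraMap K L).fieldRange) ((Subfield.mem_bot_iff_pow_eq_self L p).mpr hd)

theorem mem_range_algebraMap_of_algHom_apply_eq_self (hprime : (Module.finrank K L).Prime)
    {σ : L →ₐ[K] L} (hσ : σ ≠ AlgHom.id K L) {x : L} (hx : σ x = x) :
    x ∈ Set.range (algebraMap K L) := by
  have : FiniteDimensional K L := .of_finrank_pos hprime.pos
  have := isSimpleOrder_of_finrank_prime K L hprime
  rcases eq_bot_or_eq_top K⟮x⟯ with hbot | htop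
  · exact mem_bot.mp (hbot ▸ mem_adjoin_simple_self K x)
  · exact absurd (AlgHom.ext_of_adjoin_eq_top (φ₂ := AlgHom.id K L)
      (Algebra.adjoin_eq_top_of_primitive_element (.of_finite K x) htop)
      (Set.eqOn_singleton.mpr hx)) hσ

theorem minpoly_eq_X_pow_sub_X_sub_C {p : ℕ} (hp : 1 < p) {Θ : L} {a : K}
    (ha : algebraMap K L a = Θ ^ p - Θ) (hdeg : (minpoly K Θ).natDegree = p) :
    minpoly K Θ = X ^ p - X - C a := by
  have hint : IsIntegral K Θ := by
    by_contra h
    rw [minpoly.eq_zero h, natDegree_zero] at hdeg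
    omega
  have hsplit : (X ^ p - X - C a : K[X]) = X ^ p - (X + C a) := by ring
  have hmonic : (X ^ p - X - C a : K[X]).Monic := by
    rw [hsplit]
    exact monic_X_pow_sub (by rw [degree_X_add_C]; exact_mod_cast hp)
  have hnatDeg : (X ^ p - X - C a : K[X]).natDegree = p := by
    rw [hsplit, natDegree_sub_eq_left_of_natDegree_lt, natDegree_X_pow]
    rwa [natDegree_X_add_C, natDegree_X_pow]
  refine (eq_of_monic_of_dvd_of_natDegree_le (minpoly.monic hint) hmonic
    (minpoly.dvd K Θ ?_) (by rw [hdeg, hnatDeg])).symm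
  simp [ha]

end FieldTheory

namespace ASDefect

variable {K L : Type*} [Field K] [Field L] [Algebra K L]

section Generators

open Polynomial IntermediateField

variable {p : ℕ} {Θ : L}

theorem IsArtinSchreierExt.exists_algHom_apply_eq_add_one [hp : Fact p.Prime] [CharP K p]
    (hΘ : IsArtinSchreierExt K p Θ) : ∃ σ : L →ₐ[K] L, σ Θ = Θ + 1 := by
  obtain ⟨-, ⟨a, ha⟩, hadj, hfin⟩ := hΘ
  have : FiniteDimensional K L := .of_finrank_pos (hfin ▸ hp.out.pos)
  have : CharP L p := charP_of_injective_algebraMap (algebraMap K L).injective p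
  have hint : IsIntegral K Θ := .of_finite K Θ
  have hmin : minpoly K Θ = X ^ p - X - C a := by
    refine minpoly_eq_X_pow_sub_X_sub_C hp.out.one_lt ha ?_
    rw [← adjoin.finrank hint, hadj, finrank_top', hfin]
  let pb := PowerBasis.ofAdjoinEqTop hint
    (Algebra.adjoin_eq_top_of_primitive_element hint.isAlgebraic hadj)
  refine ⟨pb.lift (Θ + 1) ?_, pb.lift_gen _ _⟩
  rw [PowerBasis.ofAdjoinEqTop_gen, hmin]
  simp [ha, add_pow_char]

theorem IsArtinSchreierExt.exists_eq_mul_add [hp : Fact p.Prime] [CharP K p]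
    (hΘ : IsArtinSchreierExt K p Θ) {Θ' : L} (hΘ' : IsArtinSchreierExt K p Θ') :
    ∃ u c : K, u ≠ 0 ∧ u ^ p = u ∧ Θ' = algebraMap K L u * Θ + algebraMap K L c := by
  obtain ⟨σ, hσ⟩ := hΘ.exists_algHom_apply_eq_add_one
  obtain ⟨-, -, -, hfin⟩ := hΘ
  obtain ⟨hΘ'K, ⟨a', ha'⟩, -, -⟩ := hΘ'
  have : CharP L p := charP_of_injective_algebraMap (algebraMap K L).injective p
  set d := σ Θ' - Θ' with hd_def
  have hd : d ^ p = d := by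
    have hfix : σ (Θ' ^ p - Θ') = Θ' ^ p - Θ' := by rw [← ha', σ.commutes]
    rw [map_sub, map_pow] at hfix
    rw [hd_def, sub_pow_char]
    linear_combination hfix
  obtain ⟨u, hu⟩ := mem_range_algebraMap_of_pow_char_eq_self (K := K) p hd
  have hσ_ne : σ ≠ AlgHom.id K L := fun h => by simp [h] at hσ
  have hfix : σ (Θ' - algebraMap K L u * Θ) = Θ' - algebraMap K L u * Θ := by
    rw [map_sub, map_mul, σ.commutes, hσ, hu, hd_def]
    ring
  obtain ⟨c, hc⟩ := mem_range_algebraMap_of_algHom_apply_eq_self (hfin ▸ hp.out) hσ_ne hfix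
  refine ⟨u, c, ?_, ?_, by rw [hc]; ring⟩
  · rintro rfl
    exact hΘ'K ⟨c, by simpa using hc⟩
  · exact (algebraMap K L).injective (by rw [map_pow, hu, hd])

end Generators

section Distance

variable {Γ : Type*} [LinearOrderedCommGroupWithZero Γ] (ω : Valuation L Γ)

theorem valuesSet_subset_valuesSet_mul_add {u : K} (hu : ω (algebraMap K L u) = 1) (c : K)
    (z : L) :
    valuesSet K ω z ⊆ valuesSet K ω (algebraMap K L u * z + algebraMap K L c) := by
  rintro γ ⟨e, hne, hval, hγ⟩
  have hshift : algebraMap K L u * z + algebraMap K L c - algebraMap K L (u * e + c)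
      = algebraMap K L u * (z - algebraMap K L e) := by
    simp only [map_add, map_mul]
    ring
  have hu0 : algebraMap K L u ≠ 0 := fun h => by simp [h] at hu
  refine ⟨u * e + c, ?_, ?_, hγ⟩
  · rw [hshift]
    exact mul_ne_zero hu0 hne
  · rw [hshift, map_mul, hu, one_mul, hval]

theorem valuesSet_mul_add {u : K} (hu : ω (algebraMap K L u) = 1) (c : K) (z : L) :
    valuesSet K ω (algebraMap K L u * z + algebraMap K L c) = valuesSet K ω z := by
  refine subset_antisymm ?_ (valuesSet_subset_valuesSet_mul_add ω hu c z)
  have hu0 : algebraMap K L u ≠ 0 := fun h => by simp [h] at hu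
  have hinv : ω (algebraMap K L u⁻¹) = 1 := by rw [map_inv₀, map_inv₀, hu, inv_one]
  have hinverse : algebraMap K L u⁻¹ * (algebraMap K L u * z + algebraMap K L c)
      + algebraMap K L (-(u⁻¹ * c)) = z := by
    rw [map_neg, map_mul, map_inv₀]
    field_simp
    ring
  simpa only [hinverse] using valuesSet_subset_valuesSet_mul_add ω hinv (-(u⁻¹ * c))
    (algebraMap K L u * z + algebraMap K L c)

theorem distInitialSeg_mul_add {u : K} (hu : ω (algebraMap K L u) = 1) (c : K) (z : L) :
    distInitialSeg K ω (algebraMap K L u * z + algebraMap K L c) = distInitialSeg K ω z := by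
  simp only [distInitialSeg, valuesSet_mul_add ω hu]

end Distance

end ASDefect

open ASDefect in
theorem artinSchreier_distance_well_defined_general
    {K L : Type*} [Field K] [Field L] [Algebra K L] (p : ℕ) (hp : p.Prime)
    (hchar : CharP K p)
    {Γ : Type*} [LinearOrderedCommGroupWithZero Γ] (ω : Valuation L Γ)
    (Θ Θ' : L) (hAS : IsArtinSchreierExt K p Θ) (hAS' : IsArtinSchreierExt K p Θ') :
    distInitialSeg K ω Θ = distInitialSeg K ω Θ' := by
  have := Fact.mk hp
  obtain ⟨u, c, hu0, hup, rfl⟩ := hAS.exists_eq_mul_add hAS'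
  have hu : ω (algebraMap K L u) = 1 :=
    ω.map_eq_one_of_pow_eq_self hp.one_lt ((map_ne_zero _).mpr hu0) (by rw [← map_pow, hup])
  exact (distInitialSeg_mul_add ω hu c Θ).symm

open ASDefect in
/-- For a defect Artin-Schreier extension `L/K`, the distance `dist (Θ, K)` (a cut
in the divisible hull of `νK`, here recorded through the downward closure in `Γ` of
the set `ω(Θ - K) ∩ νK`, which determines the cut) is independent of the choice of
Artin-Schreier generator `Θ` of `L/K`. -/
theorem artinSchreier_distance_well_defined
    {K L : Type*} [Field K] [Field L] [Algebra K L] (p : ℕ) (hp : p.Prime)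
    (hchar : CharP K p)
    {Γ : Type*} [LinearOrderedCommGroupWithZero Γ] (ω : Valuation L Γ)
    (hdefect : defect K ω = p)
    (Θ Θ' : L) (hAS : IsArtinSchreierExt K p Θ) (hAS' : IsArtinSchreierExt K p Θ') :
    distInitialSeg K ω Θ = distInitialSeg K ω Θ' :=
  artinSchreier_distance_well_defined_general p hp hchar ω Θ Θ' hAS hAS'
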